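/- In $\mathbb{R}^{2,q}$ with $z = \langle e_1 \rangle$, $x = \langle e_{q+2} \rangle$, let $y$ be the isotropic line spanned by $(q_J(\mathsf{y}), \mathsf{y}, 1)$ with $\mathsf{y} \in c_J(V_J)$, and for $\mathsf{w} \in \overline{c}_J(V_J)$ let $x_t$ be the isotropic line spanned by $(t^2 q_J(\mathsf{w}), t\mathsf{w}, 1)$. Then ${\rm cr}_1(z, x, x_t, y) = \frac{-q_J(\mathsf{y})}{-t^2 q_J(\mathsf{w}) + 2t b_J(\mathsf{w},\mathsf{y}) - q_J(\mathsf{y})}$ and its derivative at $t = 0$ equals $\frac{2 b_J(\mathsf{w},\mathsf{y})}{q_J(\mathsf{y})} > 0$. -/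

import Mathlib

open Matrix

/-- The symmetric matrix `J` with `J_{0,q-1} = J_{q-1,0} = 1`, `J_{ii} = -1` for the
middle indices, and all other entries zero. -/
noncomputable def Jmat (q : ℕ) : Matrix (Fin q) (Fin q) ℝ :=
  Matrix.of fun i j =>
    if ((i : ℕ) = 0 ∧ (j : ℕ) = q - 1) ∨ ((i : ℕ) = q - 1 ∧ (j : ℕ) = 0) then 1
    else if i = j ∧ (i : ℕ) ≠ 0 ∧ (i : ℕ) ≠ q - 1 then -1 else 0

/-- The bilinear form `b_J(s,t) = (1/2) sᵀ J t`. -/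
noncomputable def bJ (q : ℕ) (s t : Fin q → ℝ) : ℝ := (1 / 2) * (s ⬝ᵥ (Jmat q *ᵥ t))

/-- The quadratic form `q_J(s) = b_J(s,s)`. -/
noncomputable def qJ (q : ℕ) (s : Fin q → ℝ) : ℝ := bJ q s s

/-- The open cone `c_J(V_J)` of positive vectors with positive first entry. -/
def inCJ (n : ℕ) (s : Fin (n + 1) → ℝ) : Prop := 0 < s 0 ∧ 0 < qJ (n + 1) s

/-- The partial closure `c̄_J(V_J)`: `q_J ≥ 0`, first entry still strictly positive. -/
def inCJbar (n : ℕ) (s : Fin (n + 1) → ℝ) : Prop := 0 < s 0 ∧ 0 ≤ qJ (n + 1) s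

/-- Index type for `ℝ^{2,q}` in the block decomposition `⟨e₁⟩ ⊕ V_J ⊕ ⟨e_{q+2}⟩`. -/
abbrev D2 (q : ℕ) := Fin 1 ⊕ (Fin q ⊕ Fin 1)

/-- The form `Q` of signature `(2,q)` with matrix `[[0,0,-1],[0,J,0],[-1,0,0]]`. -/
noncomputable def Q2 (q : ℕ) : Matrix (D2 q) (D2 q) ℝ :=
  Matrix.fromBlocks 0 (Matrix.fromCols 0 (-1)) (Matrix.fromRows 0 (-1))
    (Matrix.fromBlocks (Jmat q) 0 0 0)

/-- The vector `(a, s, c) ∈ ℝ^{2,q}`. -/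
def vecMk (q : ℕ) (a : ℝ) (s : Fin q → ℝ) (c : ℝ) : D2 q → ℝ :=
  Sum.elim (fun _ => a) (Sum.elim s fun _ => c)

/-- The bilinear form `Q(v,w)` on `ℝ^{2,q}`. -/
noncomputable def Qf (q : ℕ) (v w : D2 q → ℝ) : ℝ := v ⬝ᵥ (Q2 q *ᵥ w)

/-- The cross ratio of four isotropic lines in `ℝ^{2,q}`, expressed in terms of
spanning vectors:  `cr₁(V₁,W₁,W₂,V₂) = (Q(ṽ₁,w̃₂)/Q(ṽ₁,w̃₁)) (Q(ṽ₂,w̃₁)/Q(ṽ₂,w̃₂))`. -/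
noncomputable def cr1Q (q : ℕ) (v1 w1 w2 v2 : D2 q → ℝ) : ℝ :=
  (Qf q v1 w2 / Qf q v1 w1) * (Qf q v2 w1 / Qf q v2 w2)

/-- The unipotent element `E₁(s)` for `p = 2`. -/
noncomputable def E1 (q : ℕ) (s : Fin q → ℝ) : Matrix (D2 q) (D2 q) ℝ :=
  Matrix.fromBlocks 1
    (Matrix.fromCols (Matrix.of fun _ j => s j) (Matrix.of fun _ _ => qJ q s))
    0 (Matrix.fromBlocks 1 (Matrix.of fun i _ => (Jmat q *ᵥ s) i) 0 1)

/-! The positivity of `b_J(𝗐, 𝗒)` is a reverse Cauchy–Schwarz inequality for the Lorentzian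
form `2 b_J(s, t) = s₀ t_L + s_L t₀ - ⟨s_mid, t_mid⟩` in light-cone coordinates (`L` the last
index, `mid` the coordinates in between): by AM–GM and Cauchy–Schwarz,
`(w₀ y_L + w_L y₀)² ≥ 4 w₀ w_L y₀ y_L > |w_mid|² |y_mid|² ≥ ⟨w_mid, y_mid⟩²`, where in the
degenerate case `w_L = 0` one has `w_mid = 0` instead.
The formula for `cr₁` is a direct evaluation of `Q`, after which the derivative at `0` is that of
a quotient of polynomials in `t`. -/

lemma Jmat_transpose (q : ℕ) : (Jmat q)ᵀ = Jmat q := by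
  ext i j
  simp only [Jmat, transpose_apply, of_apply, Fin.ext_iff]
  split_ifs <;> first | rfl | omega

lemma bJ_comm (q : ℕ) (s t : Fin q → ℝ) : bJ q s t = bJ q t s := by
  rw [bJ, bJ, dotProduct_mulVec, ← mulVec_transpose, Jmat_transpose, dotProduct_comm]

lemma bJ_zero_left (q : ℕ) (t : Fin q → ℝ) : bJ q 0 t = 0 := by simp [bJ]

lemma bJ_zero_right (q : ℕ) (s : Fin q → ℝ) : bJ q s 0 = 0 := by simp [bJ]

lemma bJ_smul_right (q : ℕ) (c : ℝ) (s t : Fin q → ℝ) : bJ q s (c • t) = c * bJ q s t := by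
  rw [bJ, bJ, mulVec_smul, dotProduct_smul, smul_eq_mul, mul_left_comm]

lemma two_mul_bJ_one (s t : Fin 1 → ℝ) : 2 * bJ 1 s t = s 0 * t 0 := by
  simp [bJ, Jmat, mulVec, dotProduct]

lemma two_mul_bJ_eq (m : ℕ) (s t : Fin (m + 2) → ℝ) :
    2 * bJ (m + 2) s t = s 0 * t (Fin.last _) + s (Fin.last _) * t 0
      - ∑ i : Fin m, s i.castSucc.succ * t i.castSucc.succ := by
  have hm : ∀ i : Fin m, (i : ℕ) ≠ m := fun i => i.isLt.ne
  simp only [bJ, dotProduct, mulVec, Fin.sum_univ_succ (n := m + 1), Fin.sum_univ_castSucc (n := m),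
    Jmat, of_apply]
  simp only [one_div, Fin.coe_ofNat_eq_mod, Nat.zero_mod, Nat.add_one_sub_one, Nat.right_eq_add,
    Nat.add_eq_zero_iff, one_ne_zero, and_false, and_true, or_self, ↓reduceIte, ne_eq,
    not_true_eq_false, not_false_eq_true, zero_mul, Fin.val_succ, Fin.val_castSucc,
    Nat.add_right_cancel_iff, hm, and_self, Finset.sum_const_zero, Fin.succ_last,
    Nat.succ_eq_add_one, Fin.val_last, or_false, one_mul, zero_add,
    Fin.succ_ne_zero, Fin.succ_inj, Fin.castSucc_inj, ite_mul, neg_mul, Finset.sum_ite_eq,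
    Finset.mem_univ, Fin.succ_eq_last_succ, Fin.castSucc_ne_last, add_zero, mul_neg,
    Finset.sum_neg_distrib, or_true, OfNat.ofNat_ne_zero, mul_inv_cancel_left₀]
  ring

lemma lt_mul_add_mul_of_sq_le {a b c d P W Y : ℝ} (ha : 0 < a) (hc : 0 < c) (hW : 0 ≤ W)
    (hY : 0 ≤ Y) (hab : W ≤ 2 * a * b) (hcd : Y < 2 * c * d) (hP : P ^ 2 ≤ W * Y) :
    P < a * d + b * c := by
  have hd : 0 < d := by nlinarith
  have hb : 0 ≤ b := by nlinarith
  by_contra! h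
  have hS : 0 < a * d + b * c := by positivity
  have hPS : (a * d + b * c) ^ 2 ≤ P ^ 2 := by gcongr
  have hWY : W * Y ≤ 2 * a * b * Y := mul_le_mul_of_nonneg_right hab hY
  rcases hb.eq_or_lt with rfl | hb
  · nlinarith [mul_pos ha hd]
  · have habcd : 2 * a * b * Y < 2 * a * b * (2 * c * d) := by gcongr
    nlinarith [sq_nonneg (a * d - b * c)]

lemma bJ_pos_of_inCJbar_of_inCJ {n : ℕ} {w y : Fin (n + 1) → ℝ} (hw : inCJbar n w)
    (hy : inCJ n y) : 0 < bJ (n + 1) w y := by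
  obtain ⟨hw0, hww⟩ := hw
  obtain ⟨hy0, hyy⟩ := hy
  rw [← mul_pos_iff_of_pos_left two_pos]
  cases n with
  | zero => rw [two_mul_bJ_one]; positivity
  | succ m =>
    rw [qJ, ← mul_nonneg_iff_of_pos_left two_pos, two_mul_bJ_eq] at hww
    rw [qJ, ← mul_pos_iff_of_pos_left two_pos, two_mul_bJ_eq] at hyy
    rw [two_mul_bJ_eq, sub_pos]
    set mid : (Fin (m + 2) → ℝ) → Fin m → ℝ := fun s i => s i.castSucc.succ
    have hCS := Finset.sum_mul_sq_le_sq_mul_sq Finset.univ (mid w) (mid y)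
    simp only [← sq] at hww hyy
    exact lt_mul_add_mul_of_sq_le hw0 hy0 (by positivity) (by positivity) (by linarith)
      (by linarith) hCS

lemma Qf_vecMk (q : ℕ) (a c a' c' : ℝ) (s s' : Fin q → ℝ) :
    Qf q (vecMk q a s c) (vecMk q a' s' c') = -(a * c') - c * a' + 2 * bJ q s s' := by
  simp only [Qf, dotProduct, vecMk, mulVec, Q2, Fintype.sum_sum_type, Finset.univ_unique,
    Fin.default_eq_zero, Fin.isValue, Sum.elim_inl, Finset.sum_singleton, Sum.elim_inr,
    fromBlocks_apply₁₁, Matrix.zero_apply, zero_mul, fromBlocks_apply₁₂, fromCols_apply_inl,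
    Finset.sum_const_zero, fromCols_apply_inr, Matrix.neg_apply, neg_mul, zero_add, mul_neg,
    Finset.sum_neg_distrib, one_apply_eq, one_mul, fromBlocks_apply₂₁, fromBlocks_apply₂₂,
    fromRows_apply_inl, add_zero, fromRows_apply_inr, bJ, one_div, ne_eq, OfNat.ofNat_ne_zero,
    not_false_eq_true, mul_inv_cancel_left₀]
  ring

lemma cr1Q_vecMk_curve (q : ℕ) (w y : Fin q → ℝ) (t : ℝ) :
    cr1Q q (vecMk q 1 0 0) (vecMk q 0 0 1) (vecMk q (t ^ 2 * qJ q w) (t • w) 1)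
        (vecMk q (qJ q y) y 1)
      = -qJ q y / (-(t ^ 2 * qJ q w) + 2 * t * bJ q w y - qJ q y) := by
  simp only [cr1Q, Qf_vecMk, bJ_smul_right, bJ_comm q y w, bJ_zero_left, bJ_zero_right]
  ring

lemma hasDerivAt_neg_div_quadratic (a b c : ℝ) (hc : c ≠ 0) :
    HasDerivAt (fun t : ℝ => -c / (-(t ^ 2 * a) + 2 * t * b - c)) (2 * b / c) 0 := by
  have hD : HasDerivAt (fun t : ℝ => -(t ^ 2 * a) + 2 * t * b - c) (2 * b) 0 :=
    ((((hasDerivAt_pow 2 (0 : ℝ)).mul_const a).neg.add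
      (((hasDerivAt_id (0 : ℝ)).const_mul 2).mul_const b)).sub_const c).congr_deriv (by simp)
  have hD0 : -((0 : ℝ) ^ 2 * a) + 2 * 0 * b - c = -c := by ring
  refine ((hasDerivAt_const (0 : ℝ) (-c)).div hD (by simpa [hD0] using hc)).congr_deriv ?_
  rw [hD0]
  field_simp
  ring

theorem stmt_12_general (n : ℕ) (ys w : Fin (n + 1) → ℝ)
    (hy : inCJ n ys) (hw : inCJbar n w) :
    (∀ t : ℝ, cr1Q (n + 1) (vecMk (n + 1) 1 0 0) (vecMk (n + 1) 0 0 1)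
        (vecMk (n + 1) (t ^ 2 * qJ (n + 1) w) (t • w) 1)
        (vecMk (n + 1) (qJ (n + 1) ys) ys 1)
      = (-qJ (n + 1) ys) /
          (-(t ^ 2 * qJ (n + 1) w) + 2 * t * bJ (n + 1) w ys - qJ (n + 1) ys)) ∧
    HasDerivAt (fun t : ℝ => cr1Q (n + 1) (vecMk (n + 1) 1 0 0) (vecMk (n + 1) 0 0 1)
        (vecMk (n + 1) (t ^ 2 * qJ (n + 1) w) (t • w) 1)
        (vecMk (n + 1) (qJ (n + 1) ys) ys 1))
      (2 * bJ (n + 1) w ys / qJ (n + 1) ys) 0 ∧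
    0 < 2 * bJ (n + 1) w ys / qJ (n + 1) ys := by
  have hcr := cr1Q_vecMk_curve (n + 1) w ys
  refine ⟨hcr, ?_, ?_⟩
  · rw [funext hcr]
    exact hasDerivAt_neg_div_quadratic _ _ _ hy.2.ne'
  · exact div_pos (mul_pos two_pos (bJ_pos_of_inCJbar_of_inCJ hw hy)) hy.2

/-- With `z = ⟨e₁⟩`, `x = ⟨e_{q+2}⟩`, `y` the isotropic line spanned by `(q_J(𝗒), 𝗒, 1)`
with `𝗒 ∈ c_J(V_J)`, and `x_t` the isotropic line spanned by `(t² q_J(𝗐), t𝗐, 1)` for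
`𝗐 ∈ c̄_J(V_J)`, `𝗐 ≠ 0`:  `cr₁(z,x,x_t,y) = -q_J(𝗒)/(-t²q_J(𝗐) + 2t b_J(𝗐,𝗒) - q_J(𝗒))`,
and its derivative at `t = 0` equals `2 b_J(𝗐,𝗒)/q_J(𝗒) > 0`. -/
theorem stmt_12 (n : ℕ) (ys w : Fin (n + 1) → ℝ)
    (hy : inCJ n ys) (hw : inCJbar n w) (hwne : w ≠ 0) :
    (∀ t : ℝ, cr1Q (n + 1) (vecMk (n + 1) 1 0 0) (vecMk (n + 1) 0 0 1)
        (vecMk (n + 1) (t ^ 2 * qJ (n + 1) w) (t • w) 1)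
        (vecMk (n + 1) (qJ (n + 1) ys) ys 1)
      = (-qJ (n + 1) ys) /
          (-(t ^ 2 * qJ (n + 1) w) + 2 * t * bJ (n + 1) w ys - qJ (n + 1) ys)) ∧
    HasDerivAt (fun t : ℝ => cr1Q (n + 1) (vecMk (n + 1) 1 0 0) (vecMk (n + 1) 0 0 1)
        (vecMk (n + 1) (t ^ 2 * qJ (n + 1) w) (t • w) 1)
        (vecMk (n + 1) (qJ (n + 1) ys) ys 1))
      (2 * bJ (n + 1) w ys / qJ (n + 1) ys) 0 ∧
    0 < 2 * bJ (n + 1) w ys / qJ (n + 1) ys :=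
  stmt_12_general n ys w hy hw
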